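/- Let d ∈ ℕ and let f, g, p : ℝ^d → ℝ be measurable functions such that f takes values in {−1,1}, |g(x)| ≤ 1 for all x, g ∈ L²(γ_d), p ∈ L²(γ_d), and ‖p‖_{L²(γ_d)} ≤ 1. Define q = (1/4)·(1 + p)² and h = (f + 1)/2 (so h is {0,1}-valued). Then q(x) ≥ 0 for all x ∈ ℝ^d and ‖q − h‖_{L¹(γ_d)} ≤ ‖p − g‖_{L²(γ_d)} + ‖f − g‖_{L¹(γ_d)}. -/

import Mathlib

/-!
Since `f = ±1`, the indicator `h = (1 + f) / 2` equals `(1 + f)² / 4`, so with `g` as a pivot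
`q - h = ((1 + p)² - (1 + g)²) / 4 + ((1 + g)² - (1 + f)²) / 4`
and each term factors as `(a - b) · (2 + a + b) / 4`. In the second term the weight is bounded by `1`
pointwise; in the first it is `(2 + g) / 4 + p / 4`, whose `L²` norm is at most `3/4 + 1/4`, so
Cauchy–Schwarz bounds its `L¹` norm by `‖p - g‖_{L²}`.
-/

open MeasureTheory ProbabilityTheory Real

/-- The standard Gaussian measure on `ℝ^d`, as the `d`-fold product of the
standard Gaussian measure on `ℝ`. -/
noncomputable def gaussPi (d : ℕ) : Measure (Fin d → ℝ) :=
  Measure.pi fun _ => gaussianReal 0 1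

instance gaussPi.instIsProbabilityMeasure (d : ℕ) : IsProbabilityMeasure (gaussPi d) := by
  unfold gaussPi; infer_instance

lemma abs_two_add_add_div_four_le_one {a b : ℝ} (ha : |a| ≤ 1) (hb : |b| ≤ 1) :
    |(2 + a + b) / 4| ≤ 1 := by
  rw [abs_le] at ha hb ⊢
  constructor <;> linarith

lemma abs_one_add_sq_sub_one_add_sq_div_four_le {a b : ℝ} (ha : |a| ≤ 1) (hb : |b| ≤ 1) :
    |((1 + a) ^ 2 - (1 + b) ^ 2) / 4| ≤ |a - b| := by
  rw [show ((1 + a) ^ 2 - (1 + b) ^ 2) / 4 = (a - b) * ((2 + a + b) / 4) by ring, abs_mul]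
  exact mul_le_of_le_one_right (abs_nonneg _) (abs_two_add_add_div_four_le_one ha hb)

section ProbabilityMeasure

variable {α : Type*} [MeasurableSpace α] {μ : Measure α} [IsProbabilityMeasure μ] {p g : α → ℝ}

lemma eLpNorm_two_add_add_div_four_le_one (hpm : AEStronglyMeasurable p μ)
    (hgm : AEStronglyMeasurable g μ) (hg : ∀ x, |g x| ≤ 1) (hp : eLpNorm p 2 μ ≤ 1) :
    eLpNorm (fun x => (2 + p x + g x) / 4) 2 μ ≤ 1 := by
  have hg_part : eLpNorm (fun x => (2 + g x) / 4) 2 μ ≤ ENNReal.ofReal (3 / 4) := by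
    refine (eLpNorm_le_of_ae_bound (C := 3 / 4) (ae_of_all _ fun x => ?_)).trans_eq (by simp)
    have hgx := abs_le.mp (hg x)
    rw [Real.norm_eq_abs, abs_le]
    constructor <;> linarith
  have hp_part : eLpNorm (fun x => p x / 4) 2 μ ≤ ENNReal.ofReal (1 / 4) := by
    have hsmul : (fun x => p x / 4) = (4⁻¹ : ℝ) • p := by
      ext x; simp [div_eq_inv_mul]
    rw [hsmul, eLpNorm_const_smul, ← ofReal_norm]
    exact mul_le_of_le_one_right' hp |>.trans_eq (by norm_num)
  calc eLpNorm (fun x => (2 + p x + g x) / 4) 2 μ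
      = eLpNorm ((fun x => (2 + g x) / 4) + fun x => p x / 4) 2 μ := by
        congr 1; ext x; simp only [Pi.add_apply]; ring
    _ ≤ eLpNorm (fun x => (2 + g x) / 4) 2 μ + eLpNorm (fun x => p x / 4) 2 μ :=
        eLpNorm_add_le (by fun_prop) (by fun_prop) one_le_two
    _ ≤ ENNReal.ofReal (3 / 4) + ENNReal.ofReal (1 / 4) := add_le_add hg_part hp_part
    _ = 1 := by rw [← ENNReal.ofReal_add] <;> norm_num

lemma eLpNorm_one_add_sq_sub_one_add_sq_div_four_le (hpm : AEStronglyMeasurable p μ)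
    (hgm : AEStronglyMeasurable g μ) (hg : ∀ x, |g x| ≤ 1) (hp : eLpNorm p 2 μ ≤ 1) :
    eLpNorm (fun x => ((1 + p x) ^ 2 - (1 + g x) ^ 2) / 4) 1 μ
      ≤ eLpNorm (fun x => p x - g x) 2 μ :=
  calc eLpNorm (fun x => ((1 + p x) ^ 2 - (1 + g x) ^ 2) / 4) 1 μ
      = eLpNorm ((fun x => (2 + p x + g x) / 4) • fun x => p x - g x) 1 μ := by
        congr 1; ext x; simp only [smul_eq_mul, Pi.mul_apply]; ring
    _ ≤ eLpNorm (fun x => (2 + p x + g x) / 4) 2 μ * eLpNorm (fun x => p x - g x) 2 μ :=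
        eLpNorm_smul_le_mul_eLpNorm (by fun_prop) (by fun_prop)
    _ ≤ eLpNorm (fun x => p x - g x) 2 μ :=
        mul_le_of_le_one_left' (eLpNorm_two_add_add_div_four_le_one hpm hgm hg hp)

end ProbabilityMeasure

theorem q_close_to_indicator_general (d : ℕ) (f g p : (Fin d → ℝ) → ℝ)
    (hfm : Measurable f) (hgm : Measurable g) (hpm : Measurable p)
    (hf : ∀ x, f x = 1 ∨ f x = -1) (hg : ∀ x, |g x| ≤ 1)
    (hpnorm : eLpNorm p 2 (gaussPi d) ≤ 1)
    (q : (Fin d → ℝ) → ℝ) (hq : q = fun x => (1 / 4) * (1 + p x) ^ 2)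
    (h : (Fin d → ℝ) → ℝ) (hh : h = fun x => (f x + 1) / 2) :
    (∀ x, 0 ≤ q x) ∧
    eLpNorm (fun x => q x - h x) 1 (gaussPi d)
      ≤ eLpNorm (fun x => p x - g x) 2 (gaussPi d)
        + eLpNorm (fun x => f x - g x) 1 (gaussPi d) := by
  subst hq hh
  have hf_abs : ∀ x, |f x| ≤ 1 := fun x => by rcases hf x with hx | hx <;> simp [hx]
  have hsplit : (fun x => 1 / 4 * (1 + p x) ^ 2 - (f x + 1) / 2)
      = (fun x => ((1 + p x) ^ 2 - (1 + g x) ^ 2) / 4)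
        + fun x => ((1 + g x) ^ 2 - (1 + f x) ^ 2) / 4 := by
    ext x; rcases hf x with hx | hx <;> simp only [Pi.add_apply, hx] <;> ring
  refine ⟨fun x => by positivity, ?_⟩
  rw [hsplit]
  calc _ ≤ _ + _ := eLpNorm_add_le (by fun_prop) (by fun_prop) le_rfl
    _ ≤ _ := add_le_add
        (eLpNorm_one_add_sq_sub_one_add_sq_div_four_le hpm.aestronglyMeasurable
          hgm.aestronglyMeasurable hg hpnorm)
        (eLpNorm_mono fun x =>
          (abs_one_add_sq_sub_one_add_sq_div_four_le (hg x) (hf_abs x)).trans_eq (abs_sub_comm _ _))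

/-- If `f` takes values in `{-1,1}`, `|g| ≤ 1` everywhere,
`g, p ∈ L²(γ_d)` with `‖p‖_{L²(γ_d)} ≤ 1`, `q = (1/4)·(1 + p)²` and
`h = (f + 1)/2`, then `q ≥ 0` everywhere and
`‖q - h‖_{L¹(γ_d)} ≤ ‖p - g‖_{L²(γ_d)} + ‖f - g‖_{L¹(γ_d)}`. -/
theorem q_close_to_indicator (d : ℕ) (f g p : (Fin d → ℝ) → ℝ)
    (hfm : Measurable f) (hgm : Measurable g) (hpm : Measurable p)
    (hf : ∀ x, f x = 1 ∨ f x = -1) (hg : ∀ x, |g x| ≤ 1)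
    (hgL2 : MemLp g 2 (gaussPi d)) (hpL2 : MemLp p 2 (gaussPi d))
    (hpnorm : eLpNorm p 2 (gaussPi d) ≤ 1)
    (q : (Fin d → ℝ) → ℝ) (hq : q = fun x => (1 / 4) * (1 + p x) ^ 2)
    (h : (Fin d → ℝ) → ℝ) (hh : h = fun x => (f x + 1) / 2) :
    (∀ x, 0 ≤ q x) ∧
    eLpNorm (fun x => q x - h x) 1 (gaussPi d)
      ≤ eLpNorm (fun x => p x - g x) 2 (gaussPi d)
        + eLpNorm (fun x => f x - g x) 1 (gaussPi d) :=
  q_close_to_indicator_general d f g p hfm hgm hpm hf hg hpnorm q hq h hh
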